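/- arXiv:1705.03827 — 2 statements merged into one kernel-verified Lean document; each statement's English description precedes it below -/
import Mathlib

section
/- For every fixed y ∈ ℝ, as N → ∞, B_{2,N}(y) := [N⁻¹∑_{i=1}^N (1 − π_i)(1{Y_i ≤ y} − F_N(y))]² / [N⁻¹∑_{i=1}^N π_i(1 − π_i)] converges ℙ-almost surely to (f²/d)·(F(y) − k₁(y)/𝔼[X₁])², where k₁(y) = 𝔼[X₁ 1{Y₁ ≤ y}] and d = f(1 − 𝔼[X₁²]/𝔼[X₁]²) + f(1−f)·𝔼[X₁²]/𝔼[X₁]². (Auxiliary claim (limite_b2) in the proof of Lemma 3.) -/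
/-!
With `f_N = n_N / N`, expanding the sums, the numerator mean of `B_{2,N}(y)` is
`f_N (ā_N − (xa)‾_N / x̄_N)` and the denominator mean is `f_N − f_N² (x²)‾_N / x̄_N²`, where bars are
empirical means of `a = 1{Y ≤ y}`, `x = X`, `xa` and `x²`. The strong law of large numbers, applied to
these four functions of the i.i.d. pairs, and continuity give the limit
`f² (F(y) − k₁(y)/𝔼X)² / (f − f² 𝔼X²/(𝔼X)²)`, whose denominator is `d`; `𝔼X > 0` keeps `x̄_N` away
from `0`.
-/

open MeasureTheory ProbabilityTheory Filter Topology Finset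

lemma integral_pos_of_ae_pos {Ω : Type*} [MeasurableSpace Ω] {μ : Measure Ω} [NeZero μ]
    {g : Ω → ℝ} (hg : ∀ᵐ ω ∂μ, 0 < g ω) (hgi : Integrable g μ) : 0 < ∫ ω, g ω ∂μ := by
  have hnonneg : 0 ≤ᵐ[μ] g := hg.mono fun _ h => h.le
  refine (integral_nonneg_of_ae hnonneg).lt_of_ne fun h => ?_
  have hzero : g =ᵐ[μ] 0 := (integral_eq_zero_iff_of_nonneg_ae hnonneg hgi).1 h.symm
  obtain ⟨ω, hpos, hz⟩ := (hg.and hzero).exists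
  exact hpos.ne' hz

lemma ae_tendsto_average_comp {Ω E : Type*} [MeasurableSpace Ω] [MeasurableSpace E]
    {P : Measure Ω} {Z : ℕ → Ω → E} (hindep : iIndepFun Z P)
    (hident : ∀ i, IdentDistrib (Z i) (Z 0) P P) {g : E → ℝ} (hg : Measurable g)
    (hgi : Integrable (fun ω => g (Z 0 ω)) P) :
    ∀ᵐ ω ∂P, Tendsto (fun N : ℕ => (∑ i ∈ range N, g (Z i ω)) / N) atTop
      (𝓝 (∫ ω, g (Z 0 ω) ∂P)) :=
  strong_law_ae_real (fun i ω => g (Z i ω)) hgi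
    (fun _ _ hij => (hindep.comp (fun _ => g) (fun _ => hg)).indepFun hij)
    (fun i => (hident i).comp hg)

lemma integral_ite_le_eq_measureReal {Ω : Type*} [MeasurableSpace Ω] (P : Measure Ω)
    {V : Ω → ℝ} (hV : Measurable V) (y : ℝ) :
    ∫ ω, (if V ω ≤ y then (1 : ℝ) else 0) ∂P = P.real {ω | V ω ≤ y} := by
  rw [← integral_indicator_one (measurableSet_le hV measurable_const)]
  rfl

section WeightedMeans

variable {ι : Type*} (s : Finset ι) (a x : ι → ℝ) (c : ℝ)

lemma inv_card_mul_sum_one_sub_mul_sub_mean (hS : ∑ i ∈ s, x i ≠ 0) :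
    (#s : ℝ)⁻¹ * ∑ i ∈ s, (1 - c * x i / ∑ j ∈ s, x j) * (a i - (#s : ℝ)⁻¹ * ∑ k ∈ s, a k) =
      c / #s * ((∑ i ∈ s, a i) / #s -
        (∑ i ∈ s, x i * a i) / #s / ((∑ i ∈ s, x i) / #s)) := by
  have hs : (#s : ℝ) ≠ 0 := Nat.cast_ne_zero.2 (card_ne_zero.2 (nonempty_of_sum_ne_zero hS))
  set S := ∑ j ∈ s, x j with hS_def
  set m := (#s : ℝ)⁻¹ * ∑ k ∈ s, a k
  have hterm : ∀ i ∈ s, (1 - c * x i / S) * (a i - m) =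
      a i - m - c / S * (x i * a i) + c / S * m * x i := fun i _ => by ring
  rw [sum_congr rfl hterm]
  simp only [sum_add_distrib, sum_sub_distrib, ← mul_sum, sum_const, nsmul_eq_mul, m, ← hS_def]
  field_simp
  ring

lemma inv_card_mul_sum_mul_one_sub (hS : ∑ i ∈ s, x i ≠ 0) :
    (#s : ℝ)⁻¹ * ∑ i ∈ s, (c * x i / ∑ j ∈ s, x j) * (1 - c * x i / ∑ j ∈ s, x j) =
      c / #s - (c / #s) ^ 2 * ((∑ i ∈ s, x i ^ 2) / #s / ((∑ i ∈ s, x i) / #s) ^ 2) := by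
  have hs : (#s : ℝ) ≠ 0 := Nat.cast_ne_zero.2 (card_ne_zero.2 (nonempty_of_sum_ne_zero hS))
  set S := ∑ j ∈ s, x j with hS_def
  have hterm : ∀ i ∈ s, (c * x i / S) * (1 - c * x i / S) =
      c / S * x i - (c / S) ^ 2 * x i ^ 2 := fun i _ => by ring
  rw [sum_congr rfl hterm, sum_sub_distrib, ← mul_sum, ← mul_sum, ← hS_def]
  field_simp

end WeightedMeans

noncomputable def inclusionProb (x : ℕ → ℝ) (n N i : ℕ) : ℝ := n * x i / ∑ j ∈ range N, x j

/-- `B_{2,N}` of the paper, with `a i = 1{Yᵢ ≤ y}`; `inclusionProb x n N i` is `πᵢ`. -/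
noncomputable def b2Stat (a x : ℕ → ℝ) (n N : ℕ) : ℝ :=
  ((N : ℝ)⁻¹ * ∑ i ∈ range N,
      (1 - inclusionProb x n N i) * (a i - (N : ℝ)⁻¹ * ∑ k ∈ range N, a k)) ^ 2 /
    ((N : ℝ)⁻¹ * ∑ i ∈ range N, inclusionProb x n N i * (1 - inclusionProb x n N i))

lemma tendsto_b2Stat {a x : ℕ → ℝ} {n : ℕ → ℕ} {f F k μ m : ℝ}
    (hfN : Tendsto (fun N : ℕ => (n N : ℝ) / N) atTop (𝓝 f))
    (ha : Tendsto (fun N : ℕ => (∑ i ∈ range N, a i) / N) atTop (𝓝 F))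
    (hx : Tendsto (fun N : ℕ => (∑ i ∈ range N, x i) / N) atTop (𝓝 μ))
    (hxa : Tendsto (fun N : ℕ => (∑ i ∈ range N, x i * a i) / N) atTop (𝓝 k))
    (hx2 : Tendsto (fun N : ℕ => (∑ i ∈ range N, x i ^ 2) / N) atTop (𝓝 m))
    (hμ : μ ≠ 0) (hd : f - f ^ 2 * (m / μ ^ 2) ≠ 0) :
    Tendsto (fun N => b2Stat a x (n N) N) atTop
      (𝓝 ((f * (F - k / μ)) ^ 2 / (f - f ^ 2 * (m / μ ^ 2)))) := by
  have hS : ∀ᶠ N : ℕ in atTop, ∑ i ∈ range N, x i ≠ 0 :=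
    (hx.eventually_ne hμ).mono fun N h => (div_ne_zero_iff.1 h).1
  refine Tendsto.congr' (hS.mono fun N hN => ?_)
    (((hfN.mul (ha.sub (hxa.div hx hμ))).pow 2).div
      (hfN.sub ((hfN.pow 2).mul (hx2.div (hx.pow 2) (pow_ne_zero 2 hμ)))) hd)
  have hnum := inv_card_mul_sum_one_sub_mul_sub_mean (range N) a x (n N) hN
  have hden := inv_card_mul_sum_mul_one_sub (range N) x (n N) hN
  rw [card_range] at hnum hden
  simp only [Pi.div_apply, b2Stat, inclusionProb, hnum, hden]

theorem stmt_11_general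
    {Ω : Type*} [MeasurableSpace Ω] (P : Measure Ω) [IsProbabilityMeasure P]
    (Y X : ℕ → Ω → ℝ)
    (hmeas : ∀ i, Measurable fun ω => (Y i ω, X i ω))
    (hindep : iIndepFun (fun i ω => (Y i ω, X i ω)) P)
    (hident : ∀ i, IdentDistrib (fun ω => (Y i ω, X i ω)) (fun ω => (Y 0 ω, X 0 ω)) P P)
    (hpos : ∀ i, ∀ᵐ ω ∂P, 0 < X i ω)
    (hm2 : Integrable (fun ω => X 0 ω ^ 2) P)
    (n : ℕ → ℕ) (f : ℝ)
    (hfN : Tendsto (fun N : ℕ => (n N : ℝ) / N) atTop (𝓝 f))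
    (d : ℝ)
    (hd : d = f * (1 - (∫ ω, X 0 ω ^ 2 ∂P) / (∫ ω, X 0 ω ∂P) ^ 2) +
        f * (1 - f) * ((∫ ω, X 0 ω ^ 2 ∂P) / (∫ ω, X 0 ω ∂P) ^ 2))
    (hdpos : 0 < d) :
    ∀ y : ℝ, ∀ᵐ ω ∂P,
      Tendsto (fun N : ℕ =>
          ((N : ℝ)⁻¹ * ∑ i ∈ Finset.range N,
              (1 - (n N : ℝ) * X i ω / ∑ j ∈ Finset.range N, X j ω) *
                ((if Y i ω ≤ y then (1 : ℝ) else 0) -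
                  (N : ℝ)⁻¹ * ∑ k ∈ Finset.range N, if Y k ω ≤ y then (1 : ℝ) else 0)) ^ 2 /
            ((N : ℝ)⁻¹ * ∑ i ∈ Finset.range N,
              ((n N : ℝ) * X i ω / ∑ j ∈ Finset.range N, X j ω) *
                (1 - (n N : ℝ) * X i ω / ∑ j ∈ Finset.range N, X j ω))) atTop
        (𝓝 (f ^ 2 / d *
            ((P {ω | Y 0 ω ≤ y}).toReal -
              (∫ ω, X 0 ω * (if Y 0 ω ≤ y then (1 : ℝ) else 0) ∂P) / ∫ ω, X 0 ω ∂P) ^ 2)) := by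
  intro y
  set ind : ℝ × ℝ → ℝ := fun p => if p.1 ≤ y then 1 else 0
  have hind : Measurable ind :=
    Measurable.ite (measurableSet_le measurable_fst measurable_const) measurable_const
      measurable_const
  have hind_le : ∀ p, ‖ind p‖ ≤ 1 := fun p => by
    simp only [ind]
    split_ifs <;> simp
  have hX : Integrable (X 0) P :=
    ((memLp_two_iff_integrable_sq (measurable_snd.comp (hmeas 0)).aestronglyMeasurable).2
      hm2).integrable one_le_two
  have hind_int : Integrable (fun ω => ind (Y 0 ω, X 0 ω)) P :=
    .of_bound (hind.comp (hmeas 0)).aestronglyMeasurable 1 (.of_forall fun ω => hind_le _)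
  have hXind_int : Integrable (fun ω => X 0 ω * ind (Y 0 ω, X 0 ω)) P :=
    hX.mul_bdd (hind.comp (hmeas 0)).aestronglyMeasurable (.of_forall fun ω => hind_le _)
  have hF : ∫ ω, ind (Y 0 ω, X 0 ω) ∂P = (P {ω | Y 0 ω ≤ y}).toReal :=
    integral_ite_le_eq_measureReal P (measurable_fst.comp (hmeas 0)) y
  have hμ : 0 < ∫ ω, X 0 ω ∂P := integral_pos_of_ae_pos (hpos 0) hX
  have hd' : f - f ^ 2 * ((∫ ω, X 0 ω ^ 2 ∂P) / (∫ ω, X 0 ω ∂P) ^ 2) ≠ 0 := by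
    rw [hd] at hdpos
    linarith
  filter_upwards [ae_tendsto_average_comp hindep hident hind hind_int,
    ae_tendsto_average_comp hindep hident measurable_snd hX,
    ae_tendsto_average_comp hindep hident (measurable_snd.mul hind) hXind_int,
    ae_tendsto_average_comp hindep hident (measurable_snd.pow_const 2) hm2]
    with ω hA hB hC hQ
  have hlimit : (f * (∫ ω, ind (Y 0 ω, X 0 ω) ∂P -
        (∫ ω, X 0 ω * ind (Y 0 ω, X 0 ω) ∂P) / ∫ ω, X 0 ω ∂P)) ^ 2 /
      (f - f ^ 2 * ((∫ ω, X 0 ω ^ 2 ∂P) / (∫ ω, X 0 ω ∂P) ^ 2)) =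
      f ^ 2 / d * ((P {ω | Y 0 ω ≤ y}).toReal -
        (∫ ω, X 0 ω * ind (Y 0 ω, X 0 ω) ∂P) / ∫ ω, X 0 ω ∂P) ^ 2 := by
    rw [← hF, hd]
    ring
  rw [← hlimit]
  exact tendsto_b2Stat hfN hA hB hC hQ hμ.ne' hd'

/-- Auxiliary claim (limite_b2) in the proof of Lemma 3: for every fixed `y`,
`B_{2,N}(y) = [N⁻¹ ∑ᵢ (1−πᵢ)(1{Yᵢ≤y} − F_N(y))]² / [N⁻¹ ∑ᵢ πᵢ(1−πᵢ)]` converges a.s. to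
`(f²/d)(F(y) − k₁(y)/𝔼[X₁])²`. -/
theorem stmt_11
    {Ω : Type*} [MeasurableSpace Ω] (P : Measure Ω) [IsProbabilityMeasure P]
    (Y X : ℕ → Ω → ℝ)
    (hmeas : ∀ i, Measurable fun ω => (Y i ω, X i ω))
    (hindep : iIndepFun (fun i ω => (Y i ω, X i ω)) P)
    (hident : ∀ i, IdentDistrib (fun ω => (Y i ω, X i ω)) (fun ω => (Y 0 ω, X 0 ω)) P P)
    (hpos : ∀ i, ∀ᵐ ω ∂P, 0 < X i ω)
    (hm2 : Integrable (fun ω => X 0 ω ^ 2) P)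
    (hminv : Integrable (fun ω => (X 0 ω)⁻¹) P)
    (n : ℕ → ℕ) (f : ℝ) (hf0 : 0 < f) (hf1 : f < 1)
    (hfN : Tendsto (fun N : ℕ => (n N : ℝ) / N) atTop (𝓝 f))
    (d : ℝ)
    (hd : d = f * (1 - (∫ ω, X 0 ω ^ 2 ∂P) / (∫ ω, X 0 ω ∂P) ^ 2) +
        f * (1 - f) * ((∫ ω, X 0 ω ^ 2 ∂P) / (∫ ω, X 0 ω ∂P) ^ 2))
    (hdpos : 0 < d) :
    ∀ y : ℝ, ∀ᵐ ω ∂P,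
      Tendsto (fun N : ℕ =>
          ((N : ℝ)⁻¹ * ∑ i ∈ Finset.range N,
              (1 - (n N : ℝ) * X i ω / ∑ j ∈ Finset.range N, X j ω) *
                ((if Y i ω ≤ y then (1 : ℝ) else 0) -
                  (N : ℝ)⁻¹ * ∑ k ∈ Finset.range N, if Y k ω ≤ y then (1 : ℝ) else 0)) ^ 2 /
            ((N : ℝ)⁻¹ * ∑ i ∈ Finset.range N,
              ((n N : ℝ) * X i ω / ∑ j ∈ Finset.range N, X j ω) *
                (1 - (n N : ℝ) * X i ω / ∑ j ∈ Finset.range N, X j ω))) atTop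
        (𝓝 (f ^ 2 / d *
            ((P {ω | Y 0 ω ≤ y}).toReal -
              (∫ ω, X 0 ω * (if Y 0 ω ≤ y then (1 : ℝ) else 0) ∂P) / ∫ ω, X 0 ω ∂P) ^ 2)) :=
  stmt_11_general P Y X hmeas hindep hident hpos hm2 n f hfN d hd hdpos
end

section
/- Under the superpopulation setup and the high-entropy design hypothesis, for ℙ-almost all realizations of the sequence ((Y_i, X_i))_{i≥1} the following holds: for every fixed y ∈ ℝ and every ε > 0, the design probability P_N( |F̂_H(y) − F_N(y)| > ε ) tends to 0 as N → ∞; that is, the Hájek estimator F̂_H(y) converges to F_N(y) in probability with respect to the sampling design. (Claim (gliv1), the pointwise consistency underlying Proposition 2 of the paper.) -/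
/-!
Fix a realization of the superpopulation. For weights `b i ∈ [0, 1]`, the design covariance
bound makes the design variance of the Horvitz–Thompson sum `∑ D i b i / π i` at most
`∑ 1 / π i + C N`, so by Chebyshev both the numerator and the denominator of the Hájek ratio,
divided by `N`, are within `δ` of their targets outside an event of design probability
`O((∑ 1 / π i + C N) / (δ N)²)`. Since `∑ 1 / π i = (∑ X i) (∑ (X i)⁻¹) / n_N`, the strong law
of large numbers for `X` and `X⁻¹` makes this bound tend to `0` for almost every realization.
-/

open MeasureTheory ProbabilityTheory Filter Topology Finset

lemma abs_div_sub_le_of_abs_sub_le {a v F δ : ℝ} (hF : F ∈ Set.Icc (0 : ℝ) 1) (hδ : δ ≤ 1 / 2)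
    (ha : |a - F| ≤ δ) (hv : |v - 1| ≤ δ) : |a / v - F| ≤ 4 * δ := by
  have hv2 : 1 / 2 ≤ v := by linarith [(abs_le.1 hv).1]
  have hv0 : 0 < v := by linarith
  have hδ0 : 0 ≤ δ := (abs_nonneg _).trans ha
  have hnum : |a - F * v| ≤ 2 * δ := calc
    |a - F * v| = |(a - F) + F * (1 - v)| := by ring_nf
    _ ≤ |a - F| + F * |v - 1| := by
      rw [abs_sub_comm v, ← abs_of_nonneg hF.1, ← abs_mul, abs_of_nonneg hF.1]
      exact abs_add_le _ _
    _ ≤ δ + 1 * δ := by gcongr; exact hF.2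
    _ = 2 * δ := by ring
  rw [show a / v - F = (a - F * v) / v by field_simp, abs_div, abs_of_pos hv0, div_le_iff₀ hv0]
  nlinarith

lemma memLp_two_of_mem_Icc {Ω : Type*} [MeasurableSpace Ω] {μ : Measure Ω} [IsFiniteMeasure μ]
    {Z : Ω → ℝ} (hZ : AEStronglyMeasurable Z μ) (h01 : ∀ ω, Z ω ∈ Set.Icc (0 : ℝ) 1) :
    MemLp Z 2 μ :=
  MemLp.of_bound hZ 1 (ae_of_all _ fun ω => by
    rw [Real.norm_eq_abs, abs_le]; constructor <;> linarith [(h01 ω).1, (h01 ω).2])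

section Design

variable {Ω ι : Type*} [MeasurableSpace Ω] {μ : Measure Ω} [IsProbabilityMeasure μ]
  {D : ι → Ω → ℝ} {s : Finset ι}

lemma variance_le_integral_of_mem_Icc {Z : Ω → ℝ} (hZ : AEMeasurable Z μ)
    (h01 : ∀ ω, Z ω ∈ Set.Icc (0 : ℝ) 1) : Var[Z; μ] ≤ μ[Z] := by
  nlinarith [variance_le_sub_mul_sub (ae_of_all μ h01) hZ, sq_nonneg μ[Z]]

lemma variance_sum_mul_le (hD : ∀ i, Measurable (D i)) (h01 : ∀ i ω, D i ω ∈ Set.Icc (0 : ℝ) 1)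
    {κ : ℝ} (hκ : 0 ≤ κ)
    (hcov : ∀ i ∈ s, ∀ j ∈ s, i ≠ j → |cov[D i, D j; μ]| ≤ κ * (μ[D i] * μ[D j]))
    (c : ι → ℝ) :
    Var[fun ω => ∑ i ∈ s, c i * D i ω; μ] ≤
      ∑ i ∈ s, c i ^ 2 * μ[D i] + κ * (∑ i ∈ s, |c i| * μ[D i]) ^ 2 := by
  classical
  have hL i : MemLp (D i) 2 μ := memLp_two_of_mem_Icc (hD i).aestronglyMeasurable (h01 i)
  rw [variance_fun_sum' fun i _ => (hL i).const_mul (c i)]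
  have hterm : ∀ i ∈ s, ∀ j ∈ s,
      cov[fun ω => c i * D i ω, fun ω => c j * D j ω; μ] ≤
        (if i = j then c i ^ 2 * μ[D i] else 0) + κ * ((|c i| * μ[D i]) * (|c j| * μ[D j])) := by
    intro i hi j hj
    rw [covariance_const_mul_left, covariance_const_mul_right]
    rcases eq_or_ne i j with rfl | hij
    · rw [if_pos rfl, covariance_self (hD i).aemeasurable]
      have hvar := variance_le_integral_of_mem_Icc (μ := μ) (hD i).aemeasurable (h01 i)
      nlinarith [mul_le_mul_of_nonneg_left hvar (sq_nonneg (c i)),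
        mul_nonneg hκ (mul_self_nonneg (|c i| * μ[D i]))]
    · rw [if_neg hij, zero_add]
      calc c i * (c j * cov[D i, D j; μ]) ≤ |c i| * |c j| * |cov[D i, D j; μ]| := by
            rw [← abs_mul, ← abs_mul, ← mul_assoc]; exact le_abs_self _
        _ ≤ |c i| * |c j| * (κ * (μ[D i] * μ[D j])) := by gcongr; exact hcov i hi j hj hij
        _ = _ := by ring
  calc ∑ i ∈ s, ∑ j ∈ s, cov[fun ω => c i * D i ω, fun ω => c j * D j ω; μ]
      ≤ ∑ i ∈ s, ∑ j ∈ s, ((if i = j then c i ^ 2 * μ[D i] else 0) +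
          κ * ((|c i| * μ[D i]) * (|c j| * μ[D j]))) :=
        sum_le_sum fun i hi => sum_le_sum fun j hj => hterm i hi j hj
    _ = _ := by simp [sum_add_distrib, ← mul_sum, sum_mul_sum, sq]

variable (hD : ∀ i, Measurable (D i)) (h01 : ∀ i ω, D i ω ∈ Set.Icc (0 : ℝ) 1)
  {π : ι → ℝ} (hπ : ∀ i ∈ s, 0 < π i) (hmean : ∀ i ∈ s, μ[D i] = π i)
  {κ : ℝ} (hκ : 0 ≤ κ)
  (hcov : ∀ i ∈ s, ∀ j ∈ s, i ≠ j → |(∫ ω, D i ω * D j ω ∂μ) - π i * π j| ≤ κ * (π i * π j))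
  {b : ι → ℝ} (hb : ∀ i ∈ s, b i ∈ Set.Icc (0 : ℝ) 1)
include hD h01 hπ hmean

lemma integral_horvitzThompson :
    μ[fun ω => ∑ i ∈ s, D i ω * (π i)⁻¹ * b i] = ∑ i ∈ s, b i := by
  have hL i : MemLp (D i) 2 μ := memLp_two_of_mem_Icc (hD i).aestronglyMeasurable (h01 i)
  rw [integral_finsetSum _ fun i _ => ((hL i).integrable one_le_two).mul_const _ |>.mul_const _]
  refine sum_congr rfl fun i hi => ?_
  rw [integral_mul_const, integral_mul_const, hmean i hi, mul_inv_cancel₀ (hπ i hi).ne', one_mul]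

include hκ hcov hb in
lemma variance_horvitzThompson_le :
    Var[fun ω => ∑ i ∈ s, D i ω * (π i)⁻¹ * b i; μ] ≤ ∑ i ∈ s, (π i)⁻¹ + κ * #s ^ 2 := by
  have hL i : MemLp (D i) 2 μ := memLp_two_of_mem_Icc (hD i).aestronglyMeasurable (h01 i)
  have hcov' : ∀ i ∈ s, ∀ j ∈ s, i ≠ j → |cov[D i, D j; μ]| ≤ κ * (μ[D i] * μ[D j]) := by
    intro i hi j hj hij
    rw [covariance_eq_sub (hL i) (hL j), hmean i hi, hmean j hj]
    exact hcov i hi j hj hij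
  set c : ι → ℝ := fun i => (π i)⁻¹ * b i
  have hcπ : ∀ i ∈ s, c i * μ[D i] = b i := fun i hi => by
    simp only [c]; rw [hmean i hi]; field_simp [(hπ i hi).ne']
  have hT : (fun ω => ∑ i ∈ s, D i ω * (π i)⁻¹ * b i) = fun ω => ∑ i ∈ s, c i * D i ω :=
    funext fun ω => sum_congr rfl fun i _ => by ring
  rw [hT]
  refine (variance_sum_mul_le hD h01 hκ hcov' c).trans (add_le_add ?_ ?_)
  · refine sum_le_sum fun i hi => ?_
    have hbi := hb i hi
    rw [sq, mul_assoc, hcπ i hi]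
    simp only [c]
    have := inv_nonneg.2 (hπ i hi).le
    nlinarith [mul_le_mul_of_nonneg_left (mul_le_one₀ hbi.2 hbi.1 hbi.2) this]
  · have hsum : ∑ i ∈ s, |c i| * μ[D i] = ∑ i ∈ s, b i := sum_congr rfl fun i hi => by
      rw [abs_of_nonneg (mul_nonneg (inv_nonneg.2 (hπ i hi).le) (hb i hi).1), hcπ i hi]
    have h0 : 0 ≤ ∑ i ∈ s, b i := sum_nonneg fun i hi => (hb i hi).1
    have h1 : ∑ i ∈ s, b i ≤ #s := by
      simpa using sum_le_sum fun i hi => (hb i hi).2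
    rw [hsum]
    gcongr

include hκ hcov hb in
lemma meas_ge_abs_horvitzThompson_sub_le {δ : ℝ} (hδ : 0 < δ) :
    μ {ω | δ ≤ |∑ i ∈ s, D i ω * (π i)⁻¹ * b i - ∑ i ∈ s, b i|} ≤
      ENNReal.ofReal ((∑ i ∈ s, (π i)⁻¹ + κ * #s ^ 2) / δ ^ 2) := by
  have hL i : MemLp (D i) 2 μ := memLp_two_of_mem_Icc (hD i).aestronglyMeasurable (h01 i)
  have hcheb := meas_ge_le_variance_div_sq
    (memLp_finsetSum s fun i _ => ((hL i).mul_const (π i)⁻¹).mul_const (b i)) hδ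
  rw [integral_horvitzThompson hD h01 hπ hmean] at hcheb
  refine hcheb.trans (ENNReal.ofReal_le_ofReal ?_)
  gcongr
  exact variance_horvitzThompson_le hD h01 hπ hmean hκ hcov hb

include hκ hcov hb in
lemma meas_gt_abs_hajek_sub_le {δ ε : ℝ} (hδ : 0 < δ) (hδ2 : δ ≤ 1 / 2)
    (hδε : 4 * δ ≤ ε) (hs : s.Nonempty) :
    μ {ω | ε < |(∑ i ∈ s, D i ω * (π i)⁻¹ * b i) / (∑ i ∈ s, D i ω * (π i)⁻¹) -
        (#s : ℝ)⁻¹ * ∑ i ∈ s, b i|} ≤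
      2 * ENNReal.ofReal ((∑ i ∈ s, (π i)⁻¹ + κ * #s ^ 2) / (δ * #s) ^ 2) := by
  have hn : (0 : ℝ) < #s := by exact_mod_cast hs.card_pos
  have hsub : {ω | ε < |(∑ i ∈ s, D i ω * (π i)⁻¹ * b i) / (∑ i ∈ s, D i ω * (π i)⁻¹) -
        (#s : ℝ)⁻¹ * ∑ i ∈ s, b i|} ⊆
      {ω | δ * #s ≤ |∑ i ∈ s, D i ω * (π i)⁻¹ * b i - ∑ i ∈ s, b i|} ∪
      {ω | δ * #s ≤ |∑ i ∈ s, D i ω * (π i)⁻¹ * 1 - ∑ i ∈ s, (1 : ℝ)|} := by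
    intro ω hω
    by_contra hcon
    simp only [Set.mem_union, Set.mem_ofPred_eq, not_or, not_le, mul_one, sum_const,
      nsmul_eq_mul] at hω hcon
    obtain ⟨hA, hB⟩ := hcon
    have hF : (#s : ℝ)⁻¹ * ∑ i ∈ s, b i ∈ Set.Icc (0 : ℝ) 1 := by
      refine ⟨by positivity [sum_nonneg fun i hi => (hb i hi).1], ?_⟩
      rw [inv_mul_le_iff₀ hn, mul_one]
      simpa using sum_le_sum fun i hi => (hb i hi).2
    have key := abs_div_sub_le_of_abs_sub_le hF hδ2
      (a := (#s : ℝ)⁻¹ * ∑ i ∈ s, D i ω * (π i)⁻¹ * b i)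
      (v := (#s : ℝ)⁻¹ * ∑ i ∈ s, D i ω * (π i)⁻¹) ?_ ?_
    · rw [mul_div_mul_left _ _ (inv_ne_zero hn.ne')] at key
      linarith
    · rw [← mul_sub, abs_mul, abs_inv, abs_of_pos hn, inv_mul_le_iff₀ hn]
      linarith
    · rw [show (#s : ℝ)⁻¹ * ∑ i ∈ s, D i ω * (π i)⁻¹ - 1 =
          (#s : ℝ)⁻¹ * (∑ i ∈ s, D i ω * (π i)⁻¹ - #s) by field_simp,
        abs_mul, abs_inv, abs_of_pos hn, inv_mul_le_iff₀ hn]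
      linarith
  refine (measure_mono hsub).trans ((measure_union_le _ _).trans ?_)
  rw [two_mul]
  gcongr
  · exact meas_ge_abs_horvitzThompson_sub_le hD h01 hπ hmean hκ hcov hb (by positivity)
  · exact meas_ge_abs_horvitzThompson_sub_le hD h01 hπ hmean hκ hcov
      (b := fun _ => 1) (fun _ _ => ⟨zero_le_one, le_rfl⟩) (by positivity)

end Design

lemma tendsto_sum_inv_inclusionProb_div_sq {x : ℕ → ℝ} {n : ℕ → ℕ} {f a a' : ℝ} (hf : f ≠ 0)
    (hn : Tendsto (fun N : ℕ => (n N : ℝ) / N) atTop (𝓝 f))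
    (hx : Tendsto (fun N : ℕ => (N : ℝ)⁻¹ * ∑ i ∈ range N, x i) atTop (𝓝 a))
    (hxinv : Tendsto (fun N : ℕ => (N : ℝ)⁻¹ * ∑ i ∈ range N, (x i)⁻¹) atTop (𝓝 a'))
    (C δ : ℝ) :
    Tendsto (fun N : ℕ => (∑ i ∈ range N, ((n N : ℝ) * x i / ∑ j ∈ range N, x j)⁻¹ +
      C / N * N ^ 2) / (δ * N) ^ 2) atTop (𝓝 0) := by
  have hlim := ((((hx.mul hxinv).mul (hn.inv₀ hf)).mul tendsto_inv_atTop_nhds_zero_nat).add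
    ((tendsto_const_nhds (x := C)).mul tendsto_inv_atTop_nhds_zero_nat)).div_const (δ ^ 2)
  rw [mul_zero, mul_zero, add_zero, zero_div] at hlim
  refine hlim.congr' ?_
  filter_upwards [eventually_ne_atTop 0] with N hN
  have hsum : ∑ i ∈ range N, ((n N : ℝ) * x i / ∑ j ∈ range N, x j)⁻¹ =
      (∑ j ∈ range N, x j) * (n N : ℝ)⁻¹ * ∑ i ∈ range N, (x i)⁻¹ := by
    rw [mul_sum]
    exact sum_congr rfl fun i _ => by rw [inv_div, div_eq_mul_inv, mul_inv]; ring
  rw [hsum, inv_div]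
  field_simp

lemma strong_law_ae_comp {Ω E : Type*} [MeasurableSpace Ω] [MeasurableSpace E] {P : Measure Ω}
    {Z : ℕ → Ω → E} (hindep : iIndepFun Z P) (hident : ∀ i, IdentDistrib (Z i) (Z 0) P P)
    {g : E → ℝ} (hg : Measurable g) (hint : Integrable (fun ω => g (Z 0 ω)) P) :
    ∀ᵐ ω ∂P, Tendsto (fun N : ℕ => (N : ℝ)⁻¹ * ∑ i ∈ range N, g (Z i ω)) atTop
      (𝓝 P[fun ω => g (Z 0 ω)]) := by
  simpa only [smul_eq_mul] using strong_law_ae (fun i ω => g (Z i ω)) hint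
    (fun i j hij => (hindep.indepFun hij).comp hg hg) fun i => (hident i).comp hg

theorem stmt_13_general
    {Ω Ω' : Type*} [MeasurableSpace Ω] [MeasurableSpace Ω']
    (P : Measure Ω) [IsProbabilityMeasure P]
    (Y X : ℕ → Ω → ℝ)
    (hindep : iIndepFun (fun i ω => (Y i ω, X i ω)) P)
    (hident : ∀ i, IdentDistrib (fun ω => (Y i ω, X i ω)) (fun ω => (Y 0 ω, X 0 ω)) P P)
    (hpos : ∀ i, ∀ᵐ ω ∂P, 0 < X i ω)
    (hm2 : Integrable (fun ω => X 0 ω ^ 2) P)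
    (hminv : Integrable (fun ω => (X 0 ω)⁻¹) P)
    (n : ℕ → ℕ) (f : ℝ) (hf0 : 0 < f)
    (hfN : Tendsto (fun N : ℕ => (n N : ℝ) / N) atTop (𝓝 f))
    -- the high-entropy sampling design: for each `N` and each realization `ω` of the
    -- superpopulation, a design law `Pd N ω` for the membership indicators `D N i`
    (C : ℝ) (hC : 0 < C)
    (Pd : ℕ → Ω → Measure Ω') (hPd : ∀ N ω, IsProbabilityMeasure (Pd N ω))
    (D : ℕ → ℕ → Ω' → ℝ)
    (hD01 : ∀ N i ω', D N i ω' = 0 ∨ D N i ω' = 1)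
    (hDmeas : ∀ N i, Measurable (D N i))
    (hmean : ∀ N (ω : Ω), (∀ j < N, 0 < X j ω) → ∀ i < N,
      ∫ ω', D N i ω' ∂(Pd N ω) = (n N : ℝ) * X i ω / ∑ j ∈ Finset.range N, X j ω)
    (hcov : ∀ N (ω : Ω), (∀ j < N, 0 < X j ω) → ∀ i < N, ∀ j < N, i ≠ j →
      |(∫ ω', D N i ω' * D N j ω' ∂(Pd N ω)) -
          ((n N : ℝ) * X i ω / ∑ k ∈ Finset.range N, X k ω) *
            ((n N : ℝ) * X j ω / ∑ k ∈ Finset.range N, X k ω)| ≤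
        C / N * (((n N : ℝ) * X i ω / ∑ k ∈ Finset.range N, X k ω) *
          ((n N : ℝ) * X j ω / ∑ k ∈ Finset.range N, X k ω))) :
    ∀ᵐ ω ∂P, ∀ y : ℝ, ∀ ε > (0 : ℝ),
      Tendsto (fun N : ℕ =>
          Pd N ω {ω' | ε <
            |(∑ i ∈ Finset.range N,
                D N i ω' * ((n N : ℝ) * X i ω / ∑ j ∈ Finset.range N, X j ω)⁻¹ *
                  (if Y i ω ≤ y then (1 : ℝ) else 0)) /
                (∑ i ∈ Finset.range N,
                  D N i ω' * ((n N : ℝ) * X i ω / ∑ j ∈ Finset.range N, X j ω)⁻¹) -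
              (N : ℝ)⁻¹ * ∑ i ∈ Finset.range N, (if Y i ω ≤ y then (1 : ℝ) else 0)|})
        atTop (𝓝 0) := by
  have hX0 : Integrable (X 0) P :=
    ((memLp_two_iff_integrable_sq (measurable_snd.comp_aemeasurable
      (hident 0).aemeasurable_fst).aestronglyMeasurable).2 hm2).integrable one_le_two
  filter_upwards [strong_law_ae_comp hindep hident measurable_snd hX0,
    strong_law_ae_comp hindep hident measurable_snd.inv hminv, ae_all_iff.2 hpos]
    with ω hmeanX hmeanXinv hXpos y ε hε
  set δ := min (1 / 2 : ℝ) (ε / 4)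
  have hδ : 0 < δ := lt_min (by norm_num) (by linarith)
  have hbound := ENNReal.Tendsto.const_mul (a := 2) (ENNReal.tendsto_ofReal
    (tendsto_sum_inv_inclusionProb_div_sq hf0.ne' hfN hmeanX hmeanXinv C δ))
    (Or.inr ENNReal.ofNat_ne_top)
  rw [ENNReal.ofReal_zero, mul_zero] at hbound
  refine tendsto_of_tendsto_of_tendsto_of_le_of_le' tendsto_const_nhds hbound
    (Eventually.of_forall fun N => zero_le) ?_
  filter_upwards [eventually_gt_atTop 0, hfN.eventually (eventually_gt_nhds hf0)] with N hN hnN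
  have hn : (0 : ℝ) < n N := (div_pos_iff_of_pos_right (Nat.cast_pos.2 hN)).1 hnN
  have hS : 0 < ∑ j ∈ range N, X j ω := sum_pos (fun j _ => hXpos j) (nonempty_range_iff.2 hN.ne')
  have hXN : ∀ j < N, 0 < X j ω := fun j _ => hXpos j
  have := hPd N ω
  have hHajek := meas_gt_abs_hajek_sub_le (μ := Pd N ω) (s := range N) (hDmeas N)
    (fun i ω' => by rcases hD01 N i ω' with h | h <;> simp [h])
    (π := fun i => (n N : ℝ) * X i ω / ∑ j ∈ range N, X j ω)
    (fun i _ => by have := hXpos i; positivity) (fun i hi => hmean N ω hXN i (mem_range.1 hi))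
    (by positivity : 0 ≤ C / N)
    (fun i hi j hj hij => hcov N ω hXN i (mem_range.1 hi) j (mem_range.1 hj) hij)
    (b := fun i => if Y i ω ≤ y then 1 else 0) (ε := ε) (fun i _ => by split_ifs <;> simp) hδ
    (min_le_left _ _) (by linarith [min_le_right (1 / 2 : ℝ) (ε / 4)])
    (nonempty_range_iff.2 hN.ne')
  rwa [card_range] at hHajek

/-- Claim (gliv1): pointwise design-consistency of the Hájek estimator of the population
distribution function, for almost all realizations of the superpopulation. -/
theorem stmt_13
    {Ω Ω' : Type*} [MeasurableSpace Ω] [MeasurableSpace Ω']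
    (P : Measure Ω) [IsProbabilityMeasure P]
    (Y X : ℕ → Ω → ℝ)
    (hmeas : ∀ i, Measurable fun ω => (Y i ω, X i ω))
    (hindep : iIndepFun (fun i ω => (Y i ω, X i ω)) P)
    (hident : ∀ i, IdentDistrib (fun ω => (Y i ω, X i ω)) (fun ω => (Y 0 ω, X 0 ω)) P P)
    (hpos : ∀ i, ∀ᵐ ω ∂P, 0 < X i ω)
    (hm2 : Integrable (fun ω => X 0 ω ^ 2) P)
    (hminv : Integrable (fun ω => (X 0 ω)⁻¹) P)
    (n : ℕ → ℕ) (f : ℝ) (hf0 : 0 < f) (hf1 : f < 1)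
    (hfN : Tendsto (fun N : ℕ => (n N : ℝ) / N) atTop (𝓝 f))
    -- the high-entropy sampling design: for each `N` and each realization `ω` of the
    -- superpopulation, a design law `Pd N ω` for the membership indicators `D N i`
    (C : ℝ) (hC : 0 < C)
    (Pd : ℕ → Ω → Measure Ω') (hPd : ∀ N ω, IsProbabilityMeasure (Pd N ω))
    (D : ℕ → ℕ → Ω' → ℝ)
    (hD01 : ∀ N i ω', D N i ω' = 0 ∨ D N i ω' = 1)
    (hDmeas : ∀ N i, Measurable (D N i))
    (hmean : ∀ N (ω : Ω), (∀ j < N, 0 < X j ω) → ∀ i < N,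
      ∫ ω', D N i ω' ∂(Pd N ω) = (n N : ℝ) * X i ω / ∑ j ∈ Finset.range N, X j ω)
    (hcov : ∀ N (ω : Ω), (∀ j < N, 0 < X j ω) → ∀ i < N, ∀ j < N, i ≠ j →
      |(∫ ω', D N i ω' * D N j ω' ∂(Pd N ω)) -
          ((n N : ℝ) * X i ω / ∑ k ∈ Finset.range N, X k ω) *
            ((n N : ℝ) * X j ω / ∑ k ∈ Finset.range N, X k ω)| ≤
        C / N * (((n N : ℝ) * X i ω / ∑ k ∈ Finset.range N, X k ω) *
          ((n N : ℝ) * X j ω / ∑ k ∈ Finset.range N, X k ω))) :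
    ∀ᵐ ω ∂P, ∀ y : ℝ, ∀ ε > (0 : ℝ),
      Tendsto (fun N : ℕ =>
          Pd N ω {ω' | ε <
            |(∑ i ∈ Finset.range N,
                D N i ω' * ((n N : ℝ) * X i ω / ∑ j ∈ Finset.range N, X j ω)⁻¹ *
                  (if Y i ω ≤ y then (1 : ℝ) else 0)) /
                (∑ i ∈ Finset.range N,
                  D N i ω' * ((n N : ℝ) * X i ω / ∑ j ∈ Finset.range N, X j ω)⁻¹) -
              (N : ℝ)⁻¹ * ∑ i ∈ Finset.range N, (if Y i ω ≤ y then (1 : ℝ) else 0)|})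
        atTop (𝓝 0) :=
  stmt_13_general P Y X hindep hident hpos hm2 hminv n f hf0 hfN C hC Pd hPd D hD01 hDmeas hmean
    hcov
end
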